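/- Let H ∈ ℝ^{m×n}, let Σ_XX ∈ ℝ^{n×n} be positive semidefinite, and let σ² > 0. Then the function g(λ) = det( H Σ_XX Hᵀ (σ²I_m + (1/λ) H Σ_XX Hᵀ)⁻¹ + I_m ) is monotone nondecreasing in λ on (0, ∞); consequently the mutual information (1/2) log g(λ) induced by the optimal generalized stealth attack increases monotonically with the weighting parameter λ. -/

import Mathlib

/-!
Write `M = H Σ_XX Hᵀ ⪰ 0` with eigenvalues `μᵢ ≥ 0` and `t = 1/λ`. Since
`M (σ²I + tM)⁻¹ + I = (σ²I + (1 + t)M)(σ²I + tM)⁻¹` and both factors are functions of `M`,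
`g(λ) = ∏ᵢ (1 + μᵢ / (σ² + μᵢ/λ))`: a product of positive factors, each nondecreasing in `λ`.
-/

open Matrix

namespace Matrix

variable {n 𝕜 : Type*} [Fintype n] [DecidableEq n] [RCLike 𝕜]

theorem IsHermitian.det_cfc {A : Matrix n n 𝕜} (hA : A.IsHermitian) (f : ℝ → ℝ) :
    (cfc f A).det = ∏ i, (f (hA.eigenvalues i) : 𝕜) := by
  rw [hA.cfc_eq]
  simp [IsHermitian.cfc, -Unitary.conjStarAlgAut_apply]

theorem IsHermitian.det_smul_one_add_smul {A : Matrix n n 𝕜} (hA : A.IsHermitian) (a t : ℝ) :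
    (a • 1 + t • A).det = ∏ i, ((a + t * hA.eigenvalues i : ℝ) : 𝕜) := by
  rw [← hA.det_cfc (fun x => a + t * x), cfc_const_add a (fun x => t * x) A,
    cfc_const_mul t (fun x => x) A, cfc_id' ℝ A, Algebra.algebraMap_eq_smul_one]

theorem det_mul_inv_add_one {K : Type*} [Field K] {A P : Matrix n n K} (hP : P.det ≠ 0) :
    (A * P⁻¹ + 1).det = (A + P).det / P.det := by
  rw [← mul_nonsing_inv P hP.isUnit, ← add_mul, det_mul, det_nonsing_inv, Ring.inverse_eq_inv',
    div_eq_mul_inv]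

namespace PosSemidef

variable {M : Matrix n n ℝ} {σ : ℝ}

theorem det_mul_inv_smul_one_add_smul_add_one (hM : M.PosSemidef) (hσ : 0 < σ) {t : ℝ}
    (ht : 0 ≤ t) :
    (M * (σ • 1 + t • M)⁻¹ + 1).det
      = ∏ i, (1 + hM.isHermitian.eigenvalues i / (σ + t * hM.isHermitian.eigenvalues i)) := by
  have hden : ∀ i, 0 < σ + t * hM.isHermitian.eigenvalues i := fun i =>
    add_pos_of_pos_of_nonneg hσ (mul_nonneg ht (hM.eigenvalues_nonneg i))
  have hdet : (σ • 1 + t • M).det ≠ 0 := by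
    simpa [hM.isHermitian.det_smul_one_add_smul] using
      Finset.prod_ne_zero_iff.2 fun i _ => (hden i).ne'
  have hsum : M + (σ • 1 + t • M) = σ • 1 + (1 + t) • M := by module
  rw [det_mul_inv_add_one hdet, hsum, hM.isHermitian.det_smul_one_add_smul,
    hM.isHermitian.det_smul_one_add_smul, ← Finset.prod_div_distrib]
  refine Finset.prod_congr rfl fun i _ => ?_
  rw [RCLike.ofReal_real_eq_id, id, id, one_add_div (hden i).ne']
  ring

theorem det_mul_inv_smul_one_add_smul_add_one_pos (hM : M.PosSemidef) (hσ : 0 < σ) {t : ℝ}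
    (ht : 0 ≤ t) :
    0 < (M * (σ • 1 + t • M)⁻¹ + 1).det := by
  rw [hM.det_mul_inv_smul_one_add_smul_add_one hσ ht]
  refine Finset.prod_pos fun i _ => ?_
  have := hM.eigenvalues_nonneg i
  positivity

theorem monotoneOn_det_mul_inv_smul_one_add_smul_add_one (hM : M.PosSemidef) (hσ : 0 < σ) :
    MonotoneOn (fun l : ℝ => (M * (σ • 1 + l⁻¹ • M)⁻¹ + 1).det) (Set.Ioi 0) := by
  refine (MonotoneOn.finsetProd (fun i _ => ?_) (fun i _ l hl => ?_)).congr fun l hl =>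
    (hM.det_mul_inv_smul_one_add_smul_add_one hσ (inv_nonneg.2 (le_of_lt hl))).symm
  · intro a (ha : 0 < a) b (hb : 0 < b) hab
    have := hM.eigenvalues_nonneg i
    dsimp only
    gcongr
  · have := hM.eigenvalues_nonneg i
    have : 0 < l := hl
    positivity

end PosSemidef

end Matrix

/-- For `Σ_XX ⪰ 0` and `σ² > 0`, the function
`g(λ) = det(H Σ_XX Hᵀ (σ²I + (1/λ) H Σ_XX Hᵀ)⁻¹ + I)` is monotone nondecreasing on `(0, ∞)`;
consequently the mutual information `(1/2) log g(λ)` induced by the optimal generalized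
stealth attack increases monotonically with the weighting parameter `λ`. -/
theorem mutualInformation_monotone (m n : ℕ)
    (H : Matrix (Fin m) (Fin n) ℝ) (Sxx : Matrix (Fin n) (Fin n) ℝ)
    (hSxx : Sxx.PosSemidef) (σ2 : ℝ) (hσ2 : 0 < σ2) :
    MonotoneOn (fun l : ℝ =>
        ((H * Sxx * Hᵀ) * (σ2 • (1 : Matrix (Fin m) (Fin m) ℝ)
            + l⁻¹ • (H * Sxx * Hᵀ))⁻¹ + 1).det)
      (Set.Ioi (0 : ℝ)) ∧
    MonotoneOn (fun l : ℝ =>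
        1 / 2 * Real.log (((H * Sxx * Hᵀ) * (σ2 • (1 : Matrix (Fin m) (Fin m) ℝ)
            + l⁻¹ • (H * Sxx * Hᵀ))⁻¹ + 1).det))
      (Set.Ioi (0 : ℝ)) := by
  have hM : (H * Sxx * Hᵀ).PosSemidef := by
    simpa using hSxx.mul_mul_conjTranspose_same H
  have hg := hM.monotoneOn_det_mul_inv_smul_one_add_smul_add_one hσ2
  refine ⟨hg, fun a (ha : 0 < a) b hb hab => ?_⟩
  have hpos := hM.det_mul_inv_smul_one_add_smul_add_one_pos hσ2 (inv_nonneg.2 ha.le)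
  have hlog := Real.log_le_log hpos (hg ha hb hab)
  dsimp only
  linarith
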